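/- arXiv:1203.1720 — 2 statements merged into one kernel-verified Lean document; each statement's English description precedes it below -/
import Mathlib

section
/- If a graded quotient S/I of a polynomial ring has the weak Lefschetz property, then its h-vector is unimodal: there is an index p such that h_0 ≤ h_1 ≤ ⋯ ≤ h_p ≥ h_{p+1} ≥ ⋯ ≥ h_s. Moreover, if h_p ≥ h_{p+1} for some p, then h_p ≥ h_{p+1} ≥ ⋯ ≥ h_s. -/
/- ### Graded commutative algebra over polynomial rings, following the paper's
definitions of l.s.o.p., Krull dimension, regular sequences, Cohen–Macaulayness,
the weak Lefschetz property, Hilbert series and `h`-vectors. -/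

section Ring

variable (𝕜 : Type*) [Field 𝕜] {σ : Type*} [Fintype σ] [DecidableEq σ]

open MvPolynomial

/-- The Stanley–Reisner ideal `I_Δ` of a complex `Δ` on the vertex set `σ`:
the ideal generated by the squarefree monomials `x_F` for non-faces `F`. -/
noncomputable def SRideal (Δ : Set (Finset σ)) : Ideal (MvPolynomial σ 𝕜) :=
  Ideal.span {m | ∃ F : Finset σ, F ∉ Δ ∧ m = ∏ v ∈ F, MvPolynomial.X v}

/-- `idealLE I m` is `I_{≤ m}`, the ideal generated by the elements of `I`
of degree at most `m`. -/
noncomputable def idealLE (I : Ideal (MvPolynomial σ 𝕜)) (m : ℕ) :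
    Ideal (MvPolynomial σ 𝕜) :=
  Ideal.span {f | f ∈ I ∧ f.totalDegree ≤ m}

/-- The degree-`i` graded piece of `S/I`: the image of the space of
homogeneous polynomials of degree `i` in the quotient. -/
noncomputable def quotPiece (I : Ideal (MvPolynomial σ 𝕜)) (i : ℕ) :
    Submodule 𝕜 ((MvPolynomial σ 𝕜) ⧸ I) :=
  Submodule.map (Ideal.Quotient.mkₐ 𝕜 I).toLinearMap
    (MvPolynomial.homogeneousSubmodule σ 𝕜 i)

/-- The Hilbert function of `S/I`. -/
noncomputable def hilb (I : Ideal (MvPolynomial σ 𝕜)) (i : ℕ) : ℕ :=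
  Module.finrank 𝕜 (quotPiece 𝕜 I i)

/-- `θ` is a linear system of parameters for `S/I`: a sequence of linear
forms such that `S/(I + (θ))` is a finite dimensional `𝕜`-vector space. -/
def IsLsop (I : Ideal (MvPolynomial σ 𝕜)) {m : ℕ}
    (θ : Fin m → MvPolynomial σ 𝕜) : Prop :=
  (∀ i, θ i ∈ MvPolynomial.homogeneousSubmodule σ 𝕜 1) ∧
    FiniteDimensional 𝕜
      ((MvPolynomial σ 𝕜) ⧸ (I ⊔ Ideal.span (Set.range θ)))

/-- The Krull dimension of `S/I`, defined (as in the paper) as the minimal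
length of a linear system of parameters. -/
noncomputable def ringDim (I : Ideal (MvPolynomial σ 𝕜)) : ℕ :=
  sInf {m | ∃ θ : Fin m → MvPolynomial σ 𝕜, IsLsop 𝕜 I θ}

/-- `θ` is a regular sequence on `S/I`: each `θ i` is a nonzerodivisor on
`S/(I + (θ_0, …, θ_{i-1}))`. -/
def IsRegSeq (I : Ideal (MvPolynomial σ 𝕜)) {m : ℕ}
    (θ : Fin m → MvPolynomial σ 𝕜) : Prop :=
  ∀ i : Fin m, ∀ g : MvPolynomial σ 𝕜,
    θ i * g ∈ I ⊔ Ideal.span (θ '' {j | j < i}) →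
      g ∈ I ⊔ Ideal.span (θ '' {j | j < i})

/-- `S/I` is Cohen–Macaulay of Krull dimension `d`: the dimension is `d`,
and every l.s.o.p. is a regular sequence. -/
def IsCMdim (I : Ideal (MvPolynomial σ 𝕜)) (d : ℕ) : Prop :=
  ringDim 𝕜 I = d ∧
  ∀ θ : Fin d → MvPolynomial σ 𝕜, IsLsop 𝕜 I θ → IsRegSeq 𝕜 I θ

/-- An Artinian quotient `S/I` has the weak Lefschetz property: there is a
linear form `w` such that multiplication `×w : (S/I)_m → (S/I)_{m+1}` is
injective or surjective for every `m`. -/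
def HasWLP0 (I : Ideal (MvPolynomial σ 𝕜)) : Prop :=
  ∃ w : MvPolynomial σ 𝕜, w ∈ MvPolynomial.homogeneousSubmodule σ 𝕜 1 ∧
    ∀ m : ℕ,
      (∀ f ∈ quotPiece 𝕜 I m, Ideal.Quotient.mk I w * f = 0 → f = 0) ∨
      (∀ g ∈ quotPiece 𝕜 I (m+1), ∃ f ∈ quotPiece 𝕜 I m,
        Ideal.Quotient.mk I w * f = g)

/-- `S/I` has the weak Lefschetz property (in dimension `d`): it is
Cohen–Macaulay of dimension `d` and there is an l.s.o.p. `Θ` such that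
`S/(I + (Θ))` has the (Artinian) weak Lefschetz property. -/
def HasWLP (I : Ideal (MvPolynomial σ 𝕜)) (d : ℕ) : Prop :=
  IsCMdim 𝕜 I d ∧
  ∃ θ : Fin d → MvPolynomial σ 𝕜, IsLsop 𝕜 I θ ∧
    HasWLP0 𝕜 (I ⊔ Ideal.span (Set.range θ))

/-- `(h 0, h 1, …)` is the `h`-vector of `S/I` (where `d = dim S/I`), i.e.
`H(S/I, t)·(1-t)^d = ∑ᵢ hᵢ tⁱ` as formal power series, expressed by
comparing coefficients. -/
def HasHVector (I : Ideal (MvPolynomial σ 𝕜)) (d : ℕ) (h : ℕ → ℤ) : Prop :=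
  ∀ m : ℕ, h m = ∑ j ∈ Finset.range (d + 1),
    if j ≤ m then (-1 : ℤ) ^ j * (d.choose j) * (hilb 𝕜 I (m - j)) else 0

/-- `I` is a homogeneous ideal. -/
def IsHomogIdeal (I : Ideal (MvPolynomial σ 𝕜)) : Prop :=
  ∀ f ∈ I, ∀ i : ℕ, MvPolynomial.homogeneousComponent i f ∈ I

end Ring

/-! Let `V` be the degree-one part of the Artinian reduction `R`, so that `R_k = V ^ k`. If
`×w : R_p → R_{p+1}` is onto, then `R_{p+2} = V · R_{p+1} = V · w · R_p = w · R_{p+1}`, so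
surjectivity propagates to all higher degrees. Under the WLP a drop `h_{p+1} ≤ h_p` forces
surjectivity at `p`, since an injection into a space of no larger dimension is onto; hence `h`
is nonincreasing after its first drop. As `R` is finite dimensional, `h` cannot increase forever,
so a first drop exists. -/

open Module

namespace Submodule

section CommSemiring

variable {R A : Type*} [CommSemiring R] [CommSemiring A] [Algebra R A]

theorem span_singleton_mul_eq_map_mulLeft (a : A) (M : Submodule R A) :
    (R ∙ a) * M = M.map (LinearMap.mulLeft R a) := by
  ext x
  simp [mem_span_singleton_mul]

theorem span_singleton_mul_pow_le {V : Submodule R A} {a : A} (ha : a ∈ V) (m : ℕ) :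
    (R ∙ a) * V ^ m ≤ V ^ (m + 1) := by
  rw [pow_succ']
  exact mul_le_mul_left ((span_singleton_le_iff_mem a V).mpr ha) _

theorem pow_succ_le_span_singleton_mul_pow_of_le {V : Submodule R A} {a : A} {p : ℕ}
    (hp : V ^ (p + 1) ≤ (R ∙ a) * V ^ p) {q : ℕ} (hpq : p ≤ q) :
    V ^ (q + 1) ≤ (R ∙ a) * V ^ q := by
  induction q, hpq using Nat.le_induction with
  | base => exact hp
  | succ q _ ih =>
    calc V ^ (q + 1 + 1) = V * V ^ (q + 1) := pow_succ' V (q + 1)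
      _ ≤ V * ((R ∙ a) * V ^ q) := mul_le_mul_right ih _
      _ = (R ∙ a) * V ^ (q + 1) := by rw [mul_left_comm, ← pow_succ']

end CommSemiring

variable {𝕜 A : Type*} [Field 𝕜] [CommRing A] [Algebra 𝕜 A]

theorem finrank_span_singleton_mul_le [FiniteDimensional 𝕜 A] (a : A) (M : Submodule 𝕜 A) :
    finrank 𝕜 ((𝕜 ∙ a) * M) ≤ finrank 𝕜 M := by
  rw [span_singleton_mul_eq_map_mulLeft]
  exact finrank_map_le _ _

theorem finrank_span_singleton_mul_of_injOn {a : A} {M : Submodule 𝕜 A}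
    (hinj : ∀ f ∈ M, a * f = 0 → f = 0) :
    finrank 𝕜 ((𝕜 ∙ a) * M) = finrank 𝕜 M := by
  have hinj' : Function.Injective ((LinearMap.mulLeft 𝕜 a).domRestrict M) := by
    rw [← LinearMap.ker_eq_bot, LinearMap.ker_eq_bot']
    exact fun f hf => Subtype.ext (hinj f f.2 hf)
  rw [span_singleton_mul_eq_map_mulLeft, ← LinearMap.range_domRestrict,
    LinearMap.finrank_range_of_inj hinj']

/-- `a` is a weak Lefschetz element of the graded algebra generated by `V` in degree one,
whose degree-`m` part is `V ^ m`. -/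
def IsWeakLefschetzElement (V : Submodule 𝕜 A) (a : A) : Prop :=
  a ∈ V ∧ ∀ m : ℕ, (∀ f ∈ V ^ m, a * f = 0 → f = 0) ∨ V ^ (m + 1) ≤ (𝕜 ∙ a) * V ^ m

namespace IsWeakLefschetzElement

variable [FiniteDimensional 𝕜 A] {V : Submodule 𝕜 A} {a : A}

theorem pow_succ_le_span_singleton_mul_pow_of_finrank_le (ha : IsWeakLefschetzElement V a)
    {m : ℕ} (hle : finrank 𝕜 ↥(V ^ (m + 1)) ≤ finrank 𝕜 ↥(V ^ m)) :
    V ^ (m + 1) ≤ (𝕜 ∙ a) * V ^ m := by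
  rcases ha.2 m with hinj | hsurj
  · refine (eq_of_le_of_finrank_le (span_singleton_mul_pow_le ha.1 m) ?_).ge
    rwa [finrank_span_singleton_mul_of_injOn hinj]
  · exact hsurj

theorem finrank_pow_succ_le_of_le (ha : IsWeakLefschetzElement V a) {p : ℕ}
    (hp : finrank 𝕜 ↥(V ^ (p + 1)) ≤ finrank 𝕜 ↥(V ^ p)) {q : ℕ} (hpq : p ≤ q) :
    finrank 𝕜 ↥(V ^ (q + 1)) ≤ finrank 𝕜 ↥(V ^ q) :=
  (finrank_mono (pow_succ_le_span_singleton_mul_pow_of_le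
    (ha.pow_succ_le_span_singleton_mul_pow_of_finrank_le hp) hpq)).trans
    (finrank_span_singleton_mul_le a _)

end IsWeakLefschetzElement

end Submodule

theorem exists_unimodal_of_bounded {f : ℕ → ℕ} {B : ℕ} (hB : ∀ n, f n ≤ B)
    (hf : ∀ p, f (p + 1) ≤ f p → ∀ q, p ≤ q → f (q + 1) ≤ f q) :
    ∃ p, (∀ i < p, f i ≤ f (i + 1)) ∧ ∀ i, p ≤ i → f (i + 1) ≤ f i := by
  have hdrop : ∃ m, f (m + 1) ≤ f m := by
    by_contra! hlt
    have := (strictMono_nat_of_lt_succ hlt).le_apply (x := B + 1)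
    linarith [hB (B + 1)]
  classical
  exact ⟨Nat.find hdrop, fun i hi => (not_le.mp (Nat.find_min hdrop hi)).le,
    hf _ (Nat.find_spec hdrop)⟩

section Quotient

variable {𝕜 : Type*} [Field 𝕜] {σ : Type*} {J : Ideal (MvPolynomial σ 𝕜)}

theorem quotPiece_eq_pow (n : ℕ) : quotPiece 𝕜 J n = quotPiece 𝕜 J 1 ^ n := by
  rw [quotPiece, quotPiece, ← MvPolynomial.homogeneousSubmodule_one_pow, Submodule.map_pow]

theorem hilb_eq_finrank_pow (n : ℕ) : hilb 𝕜 J n = finrank 𝕜 ↥(quotPiece 𝕜 J 1 ^ n) := by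
  rw [hilb, quotPiece_eq_pow]

theorem HasWLP0.exists_isWeakLefschetzElement (h : HasWLP0 𝕜 J) :
    ∃ a, (quotPiece 𝕜 J 1).IsWeakLefschetzElement a := by
  obtain ⟨w, hw, hwlp⟩ := h
  refine ⟨Ideal.Quotient.mk J w, Submodule.mem_map_of_mem hw, fun m => ?_⟩
  simp only [← quotPiece_eq_pow]
  refine (hwlp m).imp id fun hsurj g hg => ?_
  exact Submodule.mem_span_singleton_mul.mpr (hsurj g hg)

end Quotient

theorem hVector_unimodal_of_WLP_general
    (𝕜 : Type*) [Field 𝕜] {σ : Type*}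
    (I : Ideal (MvPolynomial σ 𝕜))
    (d : ℕ)
    (θ : Fin d → MvPolynomial σ 𝕜) (hθ : IsLsop 𝕜 I θ)
    (hW : HasWLP0 𝕜 (I ⊔ Ideal.span (Set.range θ))) :
    (∃ p : ℕ,
      (∀ i < p, hilb 𝕜 (I ⊔ Ideal.span (Set.range θ)) i ≤
        hilb 𝕜 (I ⊔ Ideal.span (Set.range θ)) (i + 1)) ∧
      (∀ i, p ≤ i → hilb 𝕜 (I ⊔ Ideal.span (Set.range θ)) (i + 1) ≤
        hilb 𝕜 (I ⊔ Ideal.span (Set.range θ)) i)) ∧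
    (∀ p : ℕ, hilb 𝕜 (I ⊔ Ideal.span (Set.range θ)) (p + 1) ≤
        hilb 𝕜 (I ⊔ Ideal.span (Set.range θ)) p →
      ∀ q, p ≤ q → hilb 𝕜 (I ⊔ Ideal.span (Set.range θ)) (q + 1) ≤
        hilb 𝕜 (I ⊔ Ideal.span (Set.range θ)) q) := by
  have : FiniteDimensional 𝕜 (MvPolynomial σ 𝕜 ⧸ (I ⊔ Ideal.span (Set.range θ))) := hθ.2
  obtain ⟨a, ha⟩ := hW.exists_isWeakLefschetzElement
  simp only [hilb_eq_finrank_pow]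
  refine ⟨exists_unimodal_of_bounded (fun _ => Submodule.finrank_le _) ?_, ?_⟩ <;>
    exact fun _ hp _ => ha.finrank_pow_succ_le_of_le hp

/-- If a graded quotient `S/I` of a polynomial ring has the
weak Lefschetz property, then its `h`-vector is unimodal; moreover if
`h_p ≥ h_{p+1}` for some `p`, then `h_p ≥ h_{p+1} ≥ ⋯ ≥ h_s`. Here, `S/I`
being Cohen–Macaulay with l.s.o.p. `Θ` and Artinian reduction
`R = S/(I + (Θ))`, the `h`-vector is given by `h_k = dim_𝕜 R_k`. -/
theorem hVector_unimodal_of_WLP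
    (𝕜 : Type*) [Field 𝕜] {σ : Type*} [Fintype σ] [DecidableEq σ]
    (I : Ideal (MvPolynomial σ 𝕜)) (hhom : IsHomogIdeal 𝕜 I)
    (d : ℕ) (hCM : IsCMdim 𝕜 I d)
    (θ : Fin d → MvPolynomial σ 𝕜) (hθ : IsLsop 𝕜 I θ)
    (hW : HasWLP0 𝕜 (I ⊔ Ideal.span (Set.range θ))) :
    (∃ p : ℕ,
      (∀ i < p, hilb 𝕜 (I ⊔ Ideal.span (Set.range θ)) i ≤
        hilb 𝕜 (I ⊔ Ideal.span (Set.range θ)) (i + 1)) ∧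
      (∀ i, p ≤ i → hilb 𝕜 (I ⊔ Ideal.span (Set.range θ)) (i + 1) ≤
        hilb 𝕜 (I ⊔ Ideal.span (Set.range θ)) i)) ∧
    (∀ p : ℕ, hilb 𝕜 (I ⊔ Ideal.span (Set.range θ)) (p + 1) ≤
        hilb 𝕜 (I ⊔ Ideal.span (Set.range θ)) p →
      ∀ q, p ≤ q → hilb 𝕜 (I ⊔ Ideal.span (Set.range θ)) (q + 1) ≤
        hilb 𝕜 (I ⊔ Ideal.span (Set.range θ)) q) :=
  hVector_unimodal_of_WLP_general 𝕜 I d θ hθ hW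
end

section
/- Let Δ be a homology (d−1)-sphere over k on vertex set [n], let 1 ≤ r ≤ (d+1)/2, let Δ' be an (r−1)-stacked homology d-ball with ∂Δ' = Δ, and let S = Δ' ∪ ({v} ∗ Δ) be the homology d-sphere obtained by coning the boundary with a new vertex v. Then for any subset F of [n] of cardinality k+1 with k > d−r all of whose proper subsets are faces of Δ', the induced subcomplex S|_{V−F} satisfies H̃_{d−k}(S|_{V−F}; k) = 0. -/
open Finset

variable {V : Type*} [DecidableEq V] [Fintype V]

/-- A (possibly empty) simplicial complex on the vertex set `V`,
given as its set of faces: a collection of finite subsets of `V`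
closed under taking subsets. -/
def IsComplex (Δ : Set (Finset V)) : Prop :=
  ∀ F ∈ Δ, ∀ G ⊆ F, G ∈ Δ

/-- `skc Δ i` is the complex `Δ(i) = {F ⊆ V : skelᵢ(2^F) ⊆ Δ}`:
all subsets `F` of `V` all of whose subsets of cardinality at most `i+1`
are faces of `Δ`. -/
def skc (Δ : Set (Finset V)) (i : ℕ) : Set (Finset V) :=
  {F | ∀ G ⊆ F, G.card ≤ i + 1 → G ∈ Δ}

/-- The `k`-skeleton of a complex: faces of cardinality at most `k+1`. -/
def skel (Δ : Set (Finset V)) (k : ℕ) : Set (Finset V) :=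
  {F ∈ Δ | F.card ≤ k + 1}

/-- A missing face of `Δ`: a non-face all of whose proper subsets are faces. -/
def IsMissingFace (Δ : Set (Finset V)) (F : Finset V) : Prop :=
  F ∉ Δ ∧ ∀ G ⊂ F, G ∈ Δ

/-- The link of a face. -/
def link (Δ : Set (Finset V)) (F : Finset V) : Set (Finset V) :=
  {G | Disjoint F G ∧ F ∪ G ∈ Δ}

/-- `numFacesCard Δ j` is `f_{j-1}(Δ)`, the number of faces of `Δ` of
cardinality `j`. -/
noncomputable def numFacesCard (Δ : Set (Finset V)) (j : ℕ) : ℕ :=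
  {F : Finset V | F ∈ Δ ∧ F.card = j}.ncard

/-- The `h`-numbers of a `(d-1)`-dimensional complex:
`h_i = ∑_{j=0}^{i} (-1)^{i-j} C(d-j, i-j) f_{j-1}`. -/
noncomputable def hVec (Δ : Set (Finset V)) (d i : ℕ) : ℤ :=
  ∑ j ∈ Finset.range (i + 1),
    (-1 : ℤ) ^ (i - j) * ((d - j).choose (i - j)) * (numFacesCard Δ j)

/- ### Reduced simplicial homology over a field -/

section Homology

variable (𝕜 : Type*) [Field 𝕜] [LinearOrder V]

/-- Simplicial chains supported on a given set of finite subsets of `V`. -/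
def chainsOn (A : Set (Finset V)) : Submodule 𝕜 (Finset V → 𝕜) where
  carrier := {f | ∀ G, f G ≠ 0 → G ∈ A}
  zero_mem' := by intro G hG; simp at hG
  add_mem' := by
    intro f g hf hg G hG
    by_cases h : f G = 0
    · exact hg G (by simpa [h] using hG)
    · exact hf G h
  smul_mem' := by
    intro c f hf G hG
    exact hf G (by intro h; simp [h] at hG)

/-- The boundary operator of the (augmented) simplicial chain complex on the
full simplex on `V`: `∂(e_F) = ∑_{v ∈ F} (-1)^{pos of v in F} e_{F \ v}`,
written in the dual form `(∂ f) G = ∑_{v ∉ G} (-1)^{#{u ∈ G : u < v}} f (G ∪ {v})`.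
The augmentation is included (singletons map onto the empty-set generator),
so the homology computed below is reduced homology. -/
noncomputable def bdryMap : (Finset V → 𝕜) →ₗ[𝕜] (Finset V → 𝕜) where
  toFun f := fun G => ∑ v ∈ Gᶜ,
    ((-1 : 𝕜) ^ ((G.filter (fun u => u < v)).card)) * f (insert v G)
  map_add' f g := by
    funext G
    simp [mul_add, Finset.sum_add_distrib]
  map_smul' c f := by
    funext G
    simp [Finset.mul_sum]
    congr 1; funext v; ring

/-- Reduced cycles of `Δ` in cardinality `c` (i.e. dimension `c-1`). -/
noncomputable def redCycles (Δ : Set (Finset V)) (c : ℕ) :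
    Submodule 𝕜 (Finset V → 𝕜) :=
  (chainsOn 𝕜 {F | F ∈ Δ ∧ F.card = c}) ⊓ LinearMap.ker (bdryMap 𝕜)

/-- Reduced boundaries of `Δ` in cardinality `c`. -/
noncomputable def redBdries (Δ : Set (Finset V)) (c : ℕ) :
    Submodule 𝕜 (Finset V → 𝕜) :=
  Submodule.map (bdryMap 𝕜) (chainsOn 𝕜 {F | F ∈ Δ ∧ F.card = c + 1})

/-- `redH 𝕜 Δ c` is the reduced simplicial homology `H̃_{c-1}(Δ; 𝕜)`
(indexed by the cardinality `c` of faces rather than the dimension `c-1`). -/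
noncomputable def redH (Δ : Set (Finset V)) (c : ℕ) : Type _ :=
  ↥(redCycles 𝕜 Δ c) ⧸
    Submodule.comap (redCycles 𝕜 Δ c).subtype (redBdries 𝕜 Δ c)

noncomputable instance (Δ : Set (Finset V)) (c : ℕ) :
    AddCommGroup (redH 𝕜 Δ c) := by
  unfold redH; infer_instance

noncomputable instance (Δ : Set (Finset V)) (c : ℕ) :
    Module 𝕜 (redH 𝕜 Δ c) := by
  unfold redH; infer_instance

/-- `Δ` is a homology `n`-sphere over `𝕜`: it is an `n`-dimensional complex
such that for every face `F` (including `∅`) the reduced homology of the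
link of `F` is that of a sphere of dimension `n - #F`, i.e.
`H̃_{c-1}(lk F) = 𝕜` if `c = n + 1 - #F` and `0` otherwise. -/
def IsHomologySphere (Δ : Set (Finset V)) (n : ℕ) : Prop :=
  IsComplex Δ ∧ (∀ F ∈ Δ, F.card ≤ n + 1) ∧ (∃ F ∈ Δ, F.card = n + 1) ∧
  ∀ F ∈ Δ, ∀ c : ℕ,
    Module.finrank 𝕜 (redH 𝕜 (link Δ F) c) =
      if c + F.card = n + 1 then 1 else 0

/-- The boundary faces of a `d`-dimensional homology ball:
those faces `F` whose link has vanishing top reduced homology. -/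
def bdryFaces (Δ : Set (Finset V)) (d : ℕ) : Set (Finset V) :=
  {F | F ∈ Δ ∧
    Module.finrank 𝕜 (redH 𝕜 (link Δ F) (d + 1 - F.card)) = 0}

/-- `Δ` is a homology `d`-ball over `𝕜`: a `d`-dimensional complex all of
whose links have reduced homology vanishing except possibly in the top
dimension `d - #F`, where it is `𝕜` or `0`, and whose boundary complex is
a homology `(d-1)`-sphere. -/
def IsHomologyBall (Δ : Set (Finset V)) (d : ℕ) : Prop :=
  IsComplex Δ ∧ (∀ F ∈ Δ, F.card ≤ d + 1) ∧ (∃ F ∈ Δ, F.card = d + 1) ∧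
  (∀ F ∈ Δ, ∀ c : ℕ,
    (c + F.card = d + 1 → Module.finrank 𝕜 (redH 𝕜 (link Δ F) c) ≤ 1) ∧
    (c + F.card ≠ d + 1 → Module.finrank 𝕜 (redH 𝕜 (link Δ F) c) = 0)) ∧
  IsHomologySphere 𝕜 (bdryFaces 𝕜 Δ d) (d - 1)

/-- A homology `d`-ball is `(r-1)`-stacked if it has no interior faces of
dimension at most `d - r`, i.e. every interior face has cardinality at
least `d - r + 2`. -/
def IsStackedBall (Δ : Set (Finset V)) (d r : ℕ) : Prop :=
  IsHomologyBall 𝕜 Δ d ∧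
  ∀ F ∈ Δ, F ∉ bdryFaces 𝕜 Δ d → d - r + 2 ≤ F.card

end Homology

/-- The cone `{v} ∗ Δ` over a complex `Δ` with apex `v`. -/
def coneOver {V : Type*} [DecidableEq V] (v : V) (Δ : Set (Finset V)) :
    Set (Finset V) :=
  Δ ∪ ((insert v) '' Δ)

/-!
Since `d + 1 - m ≤ d - r + 1`, a face of `S|_{V∖F}` of cardinality `d + 1 - m` not containing `v`
is a face of `Δ'` of dimension at most `d - r`; as `Δ'` is `(r-1)`-stacked it lies in `∂Δ' = Δ`,
so its cone with apex `v` is again a face of `S|_{V∖F}` (because `v ∉ F`). Coning a cycle from `v`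
then exhibits it as a boundary.
-/

section ConeChain

variable {V : Type*} [Fintype V] [LinearOrder V] (𝕜 : Type*) [Field 𝕜]

omit [Fintype V] in
theorem card_filter_lt_insert {A : Finset V} {w : V} (hw : w ∉ A) (x : V) :
    ((insert w A).filter (· < x)).card =
      (A.filter (· < x)).card + if w < x then 1 else 0 := by
  rw [Finset.filter_insert]
  split_ifs <;> simp [Finset.card_insert_of_notMem, hw]

-- The sign is that of moving `v` into its place in `G`; it makes `∂ (v ∗ z) = z` for every cycle.
noncomputable def coneChain (v : V) (z : Finset V → 𝕜) : Finset V → 𝕜 := fun G =>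
  if v ∈ G then (-1 : 𝕜) ^ ((G.erase v).filter (· < v)).card * z (G.erase v) else 0

variable {𝕜}

theorem bdryMap_apply (f : Finset V → 𝕜) (G : Finset V) :
    bdryMap 𝕜 f G = ∑ w ∈ Gᶜ, (-1 : 𝕜) ^ (G.filter (· < w)).card * f (insert w G) :=
  rfl

theorem bdryMap_coneChain_of_notMem (v : V) (z : Finset V → 𝕜) {G : Finset V} (hvG : v ∉ G) :
    bdryMap 𝕜 (coneChain 𝕜 v z) G = z G := by
  rw [bdryMap_apply, Finset.sum_eq_single_of_mem v (by simpa using hvG)]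
  · rw [coneChain, if_pos (Finset.mem_insert_self v G), Finset.erase_insert hvG, ← mul_assoc,
      ← pow_add, Even.neg_one_pow ⟨_, rfl⟩, one_mul]
  · intro w _ hwv
    rw [coneChain, if_neg (by simp [hvG, Ne.symm hwv]), mul_zero]

theorem bdryMap_coneChain_insert (v : V) {z : Finset V → 𝕜} {A : Finset V} (hvA : v ∉ A)
    (hz : bdryMap 𝕜 z A = 0) :
    bdryMap 𝕜 (coneChain 𝕜 v z) (insert v A) = z (insert v A) := by
  set s : V → 𝕜 := fun x => (-1 : 𝕜) ^ (A.filter (· < x)).card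
  -- the cycle condition at `A`, with the term `w = v` split off
  have hsum : ∑ w ∈ (insert v A)ᶜ, s w * z (insert w A) = -(s v * z (insert v A)) := by
    rw [bdryMap_apply, ← Finset.erase_insert hvA, Finset.compl_erase,
      Finset.sum_insert (by simp), Finset.erase_insert hvA] at hz
    exact eq_neg_of_add_eq_zero_right hz
  -- exactly one of `v < w`, `w < v` holds, so the two sign changes give one factor `-1`
  have hterm : ∀ w ∈ (insert v A)ᶜ, (-1 : 𝕜) ^ ((insert v A).filter (· < w)).card *
      coneChain 𝕜 v z (insert w (insert v A)) = -(s v * (s w * z (insert w A))) := by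
    intro w hw
    have hwv : w ≠ v := by rintro rfl; simp at hw
    have hwA : w ∉ A := by simp_all
    rw [coneChain, if_pos (by simp), Finset.erase_insert_of_ne hwv, Finset.erase_insert hvA,
      card_filter_lt_insert hvA, card_filter_lt_insert hwA]
    rcases lt_or_gt_of_ne hwv with h | h <;> simp only [s, if_pos h, if_neg h.not_gt] <;> ring
  rw [bdryMap_apply, Finset.sum_congr rfl hterm, Finset.sum_neg_distrib, ← Finset.mul_sum, hsum,
    mul_neg, neg_neg, ← mul_assoc, ← pow_add, Even.neg_one_pow ⟨_, rfl⟩, one_mul]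

theorem bdryMap_coneChain (v : V) {z : Finset V → 𝕜} (hz : bdryMap 𝕜 z = 0) :
    bdryMap 𝕜 (coneChain 𝕜 v z) = z := by
  funext G
  by_cases hvG : v ∈ G
  · rw [← Finset.insert_erase hvG]
    exact bdryMap_coneChain_insert v (Finset.notMem_erase v G) (congrFun hz _)
  · exact bdryMap_coneChain_of_notMem v z hvG

omit [Fintype V] in
theorem coneChain_mem_chainsOn (v : V) {A : Set (Finset V)} {z : Finset V → 𝕜}
    (hz : z ∈ chainsOn 𝕜 A) :
    coneChain 𝕜 v z ∈ chainsOn 𝕜 {G | v ∈ G ∧ G.erase v ∈ A} := by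
  intro G hG
  by_cases hvG : v ∈ G
  · rw [coneChain, if_pos hvG] at hG
    exact ⟨hvG, hz _ (right_ne_zero_of_mul hG)⟩
  · simp [coneChain, hvG] at hG

theorem finrank_redH_eq_zero_of_insert_mem (v : V) {S : Set (Finset V)} {c : ℕ}
    (hS : ∀ G ∈ S, G.card = c → v ∉ G → insert v G ∈ S) :
    Module.finrank 𝕜 (redH 𝕜 S c) = 0 := by
  have hbdries : Submodule.comap (redCycles 𝕜 S c).subtype (redBdries 𝕜 S c) = ⊤ := by
    rw [Submodule.comap_subtype_eq_top]
    rintro z ⟨hz_supp, hz_cycle⟩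
    refine ⟨coneChain 𝕜 v z, fun G hG => ?_, bdryMap_coneChain v hz_cycle⟩
    obtain ⟨hvG, hGS, hGc⟩ := coneChain_mem_chainsOn v hz_supp G hG
    have hvA : v ∉ G.erase v := Finset.notMem_erase v G
    refine ⟨Finset.insert_erase hvG ▸ hS _ hGS hGc hvA, ?_⟩
    rw [← Finset.card_erase_add_one hvG, hGc]
  have : Subsingleton (redH 𝕜 S c) := Submodule.Quotient.subsingleton_iff.mpr hbdries
  exact Module.finrank_zero_of_subsingleton

end ConeChain

theorem IsStackedBall.mem_bdryFaces_of_card_le {V : Type*} [LinearOrder V] [Fintype V]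
    {𝕜 : Type*} [Field 𝕜] {Δ : Set (Finset V)} {d r : ℕ} (h : IsStackedBall 𝕜 Δ d r)
    {G : Finset V} (hG : G ∈ Δ) (hcard : G.card ≤ d - r + 1) : G ∈ bdryFaces 𝕜 Δ d := by
  by_contra hint
  have := h.2 G hG hint
  omega

theorem mem_of_mem_coneOver_of_notMem {V : Type*} [DecidableEq V] {v : V}
    {Δ : Set (Finset V)} {G : Finset V} (hG : G ∈ coneOver v Δ) (hvG : v ∉ G) : G ∈ Δ := by
  rcases hG with hG | ⟨H, -, rfl⟩
  · exact hG
  · exact absurd (Finset.mem_insert_self v H) hvG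

theorem induced_subcomplex_homology_vanishes_general
    {V : Type*} [Fintype V] [LinearOrder V] (𝕜 : Type*) [Field 𝕜]
    (Δ Δ' : Set (Finset V)) (d r m : ℕ) (v : V)
    (hr2 : 2 * r ≤ d + 1)
    (hstacked : IsStackedBall 𝕜 Δ' d r)
    (hbdry : bdryFaces 𝕜 Δ' d = Δ)
    (F : Finset V) (hvF : v ∉ F) (hm : d - r < m) :
    Module.finrank 𝕜
      (redH 𝕜 {G | G ∈ (Δ' ∪ coneOver v Δ) ∧ Disjoint G F} (d + 1 - m)) = 0 := by
  refine finrank_redH_eq_zero_of_insert_mem v fun G ⟨hGS, hGF⟩ hGc hvG =>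
    ⟨?_, Finset.disjoint_insert_left.2 ⟨hvF, hGF⟩⟩
  have hGΔ : G ∈ Δ := by
    rcases hGS with hG' | hGcone
    · exact hbdry ▸ hstacked.mem_bdryFaces_of_card_le hG' (by omega)
    · exact mem_of_mem_coneOver_of_notMem hGcone hvG
  exact Or.inr (Or.inr ⟨G, hGΔ, rfl⟩)

/-- Let `Δ` be a homology `(d-1)`-sphere over `𝕜`, let
`1 ≤ r ≤ (d+1)/2`, let `Δ'` be an `(r-1)`-stacked homology `d`-ball with
`∂Δ' = Δ`, and let `S = Δ' ∪ ({v} ∗ Δ)` be the homology `d`-sphere obtained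
by coning the boundary with a new vertex `v`. Then for any subset `F` of the
vertex set of `Δ'` of cardinality `m+1` with `m > d-r`, all of whose proper
subsets are faces of `Δ'`, the induced subcomplex `S|_{V∖F}` satisfies
`H̃_{d-m}(S|_{V∖F}; 𝕜) = 0`. -/
theorem induced_subcomplex_homology_vanishes
    {V : Type*} [Fintype V] [LinearOrder V] (𝕜 : Type*) [Field 𝕜]
    (Δ Δ' : Set (Finset V)) (d r m : ℕ) (v : V)
    (hr1 : 1 ≤ r) (hr2 : 2 * r ≤ d + 1)
    (hsphere : IsHomologySphere 𝕜 Δ (d - 1))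
    (hstacked : IsStackedBall 𝕜 Δ' d r)
    (hbdry : bdryFaces 𝕜 Δ' d = Δ)
    (hv : ∀ G ∈ Δ', v ∉ G)  -- `v` is a new vertex
    (F : Finset V) (hvF : v ∉ F) (hF : F.card = m + 1) (hm : d - r < m)
    (hproper : ∀ G ⊂ F, G ∈ Δ') :
    Module.finrank 𝕜
      (redH 𝕜 {G | G ∈ (Δ' ∪ coneOver v Δ) ∧ Disjoint G F} (d + 1 - m)) = 0 :=
  induced_subcomplex_homology_vanishes_general 𝕜 Δ Δ' d r m v hr2 hstacked hbdry F hvF hm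
end
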